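/- Let r ≥ s ≥ 1 and let ξ_0, …, ξ_r be real numbers such that ξ_0, …, ξ_s are linearly independent over ℚ and each of ξ_{s+1}, …, ξ_r is a ℚ-linear combination of ξ_0, …, ξ_s. Then ω_0(ξ_0, …, ξ_r) = ω_0(ξ_0, …, ξ_s), where for a tuple η = (η_0, …, η_m) ∈ ℝ^{m+1}, ω_0(η) is the supremum of all ω > 0 such that there exist infinitely many tuples (q_0, …, q_m) ∈ ℤ^{m+1} with |q_i η_j − q_j η_i| ≤ max(|q_0|, …, |q_m|)^{−ω} for all 0 ≤ i < j ≤ m. -/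

import Mathlib

/-!
Write `ξ' = (ξ₀, …, ξₛ)`. Restricting a good approximation `q ∈ ℤ^{r+1}` for `ξ` to its first
`s + 1` coordinates gives one for `ξ'` (the height can only drop). Since `ξ₀ ≠ 0`, the minors
`q₀ ξⱼ - qⱼ ξ₀` bound every `qⱼ` in terms of `q₀`, so infinitely many good `q` have infinitely
many restrictions.

Conversely, clearing denominators gives `D • ξ = a ξ'` for an integer matrix `a`, whose first
`s + 1` rows are `D` times the identity by linear independence, so `q' ↦ a q'` is injective.
The minors of `(a q', a ξ')` are bilinear in those of `(q', ξ')`, and `‖a q'‖ ≤ ‖a‖ ‖q'‖`: the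
constants lost are absorbed by any smaller exponent once `‖q'‖` is large.
-/

open Filter Topology

/-- `ω_0(ξ)`: the supremum (in the extended reals) of all `ω > 0` such that there are
infinitely many integer tuples `q` with `|q_i ξ_j - q_j ξ_i| ≤ (max_k |q_k|)^{-ω}`
for all `i < j`. -/
noncomputable def omega0 {n : ℕ} (ξ : Fin n → ℝ) : EReal :=
  sSup {x : EReal | ∃ ω : ℝ, 0 < ω ∧ x = (ω : EReal) ∧
    {q : Fin n → ℤ | ∀ i j : Fin n, i < j →
      |(q i : ℝ) * ξ j - (q j : ℝ) * ξ i| ≤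
        ((Finset.univ.sup fun k => (q k).natAbs : ℕ) : ℝ) ^ (-ω)}.Infinite}

open Matrix

section Wedge

variable {ι κ R : Type*} [Fintype κ] [CommRing R]

def wedge (x y : ι → R) (i j : ι) : R := x i * y j - x j * y i

lemma wedge_swap (x y : ι → R) (i j : ι) : wedge x y j i = -wedge x y i j := by
  unfold wedge; ring

lemma wedge_smul_right (x y : ι → R) (c : R) (i j : ι) :
    wedge x (c • y) i j = c * wedge x y i j := by
  simp only [wedge, Pi.smul_apply, smul_eq_mul]; ring

lemma wedge_mulVec (a : Matrix ι κ R) (x y : κ → R) (j j' : ι) :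
    wedge (a *ᵥ x) (a *ᵥ y) j j' = ∑ k, ∑ l, a j k * a j' l * wedge x y k l := by
  simp only [wedge, Matrix.mulVec, dotProduct, Finset.sum_mul_sum, mul_sub,
    Finset.sum_sub_distrib]
  rw [Finset.sum_comm (γ := κ) (f := fun k l => a j k * a j' l * (x l * y k))]
  congr 1 <;> exact Finset.sum_congr rfl fun _ _ => Finset.sum_congr rfl fun _ _ => by ring

lemma abs_wedge_mulVec_le (a : Matrix ι κ ℝ) {x y : κ → ℝ} {ε : ℝ}
    (h : ∀ k l, |wedge x y k l| ≤ ε) (j j' : ι) :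
    |wedge (a *ᵥ x) (a *ᵥ y) j j'| ≤ (∑ k, |a j k|) * (∑ l, |a j' l|) * ε := by
  rw [wedge_mulVec, Finset.sum_mul_sum, Finset.sum_mul]
  refine (Finset.abs_sum_le_sum_abs _ _).trans (Finset.sum_le_sum fun k _ => ?_)
  rw [Finset.sum_mul]
  refine (Finset.abs_sum_le_sum_abs _ _).trans (Finset.sum_le_sum fun l _ => ?_)
  rw [abs_mul, abs_mul]
  exact mul_le_mul_of_nonneg_left (h k l) (by positivity)

end Wedge

section ApproxSet

variable {ι : Type*} [Fintype ι]

def approxSet (ξ : ι → ℝ) (ω : ℝ) : Set (ι → ℤ) :=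
  {q | ∀ i j, |wedge (fun k => (q k : ℝ)) ξ i j| ≤ ‖q‖ ^ (-ω)}

lemma norm_eq_sup_natAbs (q : ι → ℤ) :
    ‖q‖ = ((Finset.univ.sup fun k => (q k).natAbs : ℕ) : ℝ) := by
  rw [Pi.norm_def, ← NNReal.coe_natCast, Nat.cast_finsetSup]
  simp only [NNReal.natCast_natAbs]

lemma one_le_norm_of_ne_zero {q : ι → ℤ} (hq : q ≠ 0) : 1 ≤ ‖q‖ := by
  obtain ⟨k, hk⟩ := Function.ne_iff.mp hq
  calc (1 : ℝ) ≤ ‖q k‖ := by rw [Int.norm_eq_abs]; exact_mod_cast Int.one_le_abs hk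
    _ ≤ ‖q‖ := norm_le_pi_norm q k

lemma norm_rpow_neg_le_one (q : ι → ℤ) {ω : ℝ} (hω : 0 < ω) : ‖q‖ ^ (-ω) ≤ 1 := by
  rcases eq_or_ne q 0 with rfl | hq
  · simp [Real.zero_rpow (neg_ne_zero.mpr hω.ne')]
  · exact Real.rpow_le_one_of_one_le_of_nonpos (one_le_norm_of_ne_zero hq) (by linarith)

lemma norm_rpow_neg_anti (q : ι → ℤ) {ω ω' : ℝ} (hω' : 0 < ω') (h : ω' ≤ ω) :
    ‖q‖ ^ (-ω) ≤ ‖q‖ ^ (-ω') := by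
  rcases eq_or_ne q 0 with rfl | hq
  · simp [Real.zero_rpow (neg_ne_zero.mpr hω'.ne'),
      Real.zero_rpow (neg_ne_zero.mpr (hω'.trans_le h).ne')]
  · exact Real.rpow_le_rpow_of_exponent_le (one_le_norm_of_ne_zero hq) (by linarith)

lemma approxSet_anti {ξ : ι → ℝ} {ω ω' : ℝ} (hω' : 0 < ω') (h : ω' ≤ ω) :
    approxSet ξ ω ⊆ approxSet ξ ω' :=
  fun q hq i j => (hq i j).trans (norm_rpow_neg_anti q hω' h)

lemma zero_mem_approxSet (ξ : ι → ℝ) (ω : ℝ) : (0 : ι → ℤ) ∈ approxSet ξ ω := fun i j => by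
  simpa [wedge] using Real.rpow_nonneg (norm_nonneg (0 : ι → ℤ)) (-ω)

end ApproxSet

lemma approxSet_eq_setOf {n : ℕ} (ξ : Fin n → ℝ) (ω : ℝ) :
    approxSet ξ ω = {q : Fin n → ℤ | ∀ i j : Fin n, i < j →
      |(q i : ℝ) * ξ j - (q j : ℝ) * ξ i| ≤
        ((Finset.univ.sup fun k => (q k).natAbs : ℕ) : ℝ) ^ (-ω)} := by
  ext q
  simp only [approxSet, Set.mem_ofPred_eq, ← norm_eq_sup_natAbs]
  refine ⟨fun hq i j _ => hq i j, fun hq i j => ?_⟩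
  rcases lt_trichotomy i j with hij | rfl | hij
  · exact hq i j hij
  · simpa [wedge] using Real.rpow_nonneg (norm_nonneg q) (-ω)
  · rw [wedge_swap, abs_neg]; exact hq j i hij

lemma omega0_eq_sSup_approxSet {n : ℕ} (ξ : Fin n → ℝ) :
    omega0 ξ = sSup {x : EReal | ∃ ω : ℝ, 0 < ω ∧ x = ω ∧ (approxSet ξ ω).Infinite} := by
  simp only [omega0, approxSet_eq_setOf]

lemma omega0_le_of_forall_lt {m n : ℕ} {ξ : Fin m → ℝ} {η : Fin n → ℝ}
    (h : ∀ ω, 0 < ω → (approxSet ξ ω).Infinite →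
      ∀ ω', 0 < ω' → ω' < ω → (approxSet η ω').Infinite) :
    omega0 ξ ≤ omega0 η := by
  rw [omega0_eq_sSup_approxSet, omega0_eq_sSup_approxSet]
  refine sSup_le ?_
  rintro _ ⟨ω, hω, rfl, hinf⟩
  refine le_of_forall_lt_imp_le_of_dense fun z hz => ?_
  obtain ⟨ω', hzω', hω'ω⟩ := EReal.lt_iff_exists_real_btwn.mp (max_lt hz (EReal.coe_pos.mpr hω))
  have hω'ω : ω' < ω := EReal.coe_lt_coe_iff.mp hω'ω
  have hω' : 0 < ω' := EReal.coe_pos.mp ((le_max_right _ _).trans_lt hzω')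
  exact ((le_max_left _ _).trans hzω'.le).trans
    (le_sSup ⟨ω', hω', rfl, h ω hω hinf ω' hω' hω'ω⟩)

section Restriction

variable {ι κ : Type*} [Fintype ι] [Fintype κ]

lemma tendsto_norm_cofinite_atTop : Tendsto (fun q : ι → ℤ => ‖q‖) cofinite atTop := by
  simpa only [cocompact_eq_cofinite] using tendsto_norm_cocompact_atTop (E := ι → ℤ)

lemma finite_setOf_norm_le (M : ℝ) : {q : ι → ℤ | ‖q‖ ≤ M}.Finite := by
  simpa only [not_lt] using
    eventually_cofinite.mp (tendsto_norm_cofinite_atTop.eventually_gt_atTop M)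

lemma finite_approxSet_inter_eval {ξ : ι → ℝ} {k : ι} (hk : ξ k ≠ 0) {ω : ℝ} (hω : 0 < ω)
    (z : ℤ) : (approxSet ξ ω ∩ (fun q => q k) ⁻¹' {z}).Finite := by
  refine (finite_setOf_norm_le ((1 + |(z : ℝ)| * ‖ξ‖) / |ξ k|)).subset ?_
  rintro q ⟨hq, rfl⟩
  refine (pi_norm_le_iff_of_nonneg (by positivity)).mpr fun l => ?_
  have hwedge : |(q k : ℝ) * ξ l - q l * ξ k| ≤ 1 := (hq k l).trans (norm_rpow_neg_le_one q hω)
  have hξl : |ξ l| ≤ ‖ξ‖ := norm_le_pi_norm ξ l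
  rw [le_div_iff₀ (abs_pos.mpr hk), Int.norm_eq_abs, ← abs_mul]
  calc |(q l : ℝ) * ξ k| ≤ |(q k : ℝ) * ξ l| + |(q k : ℝ) * ξ l - q l * ξ k| := by
        linarith [abs_sub_abs_le_abs_sub ((q l : ℝ) * ξ k) ((q k : ℝ) * ξ l),
          abs_sub_comm ((q l : ℝ) * ξ k) ((q k : ℝ) * ξ l)]
    _ ≤ |(q k : ℝ)| * ‖ξ‖ + 1 := by
        rw [abs_mul]; exact add_le_add (mul_le_mul_of_nonneg_left hξl (abs_nonneg _)) hwedge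
    _ = 1 + |(q k : ℝ)| * ‖ξ‖ := add_comm _ _

lemma norm_comp_le (q : ι → ℤ) (e : κ → ι) : ‖q ∘ e‖ ≤ ‖q‖ :=
  (pi_norm_le_iff_of_nonneg (norm_nonneg q)).mpr fun i => norm_le_pi_norm q (e i)

lemma comp_mem_approxSet {ξ : ι → ℝ} {ω : ℝ} (hω : 0 < ω) {q : ι → ℤ} (hq : q ∈ approxSet ξ ω)
    (e : κ → ι) : q ∘ e ∈ approxSet (ξ ∘ e) ω := by
  intro i j
  rcases eq_or_ne (q ∘ e) 0 with h0 | h0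
  · have hzero : ∀ k, (q (e k) : ℝ) = 0 := fun k => by simpa using congrFun h0 k
    simpa [wedge, hzero] using Real.rpow_nonneg (norm_nonneg _) _
  · exact (hq (e i) (e j)).trans
      (Real.rpow_le_rpow_of_nonpos (norm_pos_iff.mpr h0) (norm_comp_le q e) (by linarith))

end Restriction

lemma omega0_le_omega0_comp {m n : ℕ} (ξ : Fin n → ℝ) (e : Fin m → Fin n) {i₀ : Fin m}
    (h : ξ (e i₀) ≠ 0) : omega0 ξ ≤ omega0 (ξ ∘ e) := by
  refine omega0_le_of_forall_lt fun ω hω hinf ω' hω' hlt =>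
    Set.Infinite.mono (approxSet_anti hω' hlt.le) ?_
  have hsub : (· ∘ e) '' approxSet ξ ω ⊆ approxSet (ξ ∘ e) ω := by
    rintro _ ⟨q, hq, rfl⟩
    exact comp_mem_approxSet hω hq e
  refine Set.Infinite.mono hsub fun hfin => hinf ?_
  refine Set.Finite.of_finite_fibers (fun q => q (e i₀)) ?_
    fun z _ => finite_approxSet_inter_eval h hω z
  have himage := hfin.image (fun q => q i₀)
  rwa [Set.image_image] at himage

lemma eventually_mul_rpow_neg_le {A : ℝ} (hA : 0 < A) (C : ℝ) {ω ω' : ℝ} (h : ω' < ω) :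
    ∀ᶠ x : ℝ in atTop, C * x ^ (-ω) ≤ (A * x) ^ (-ω') := by
  filter_upwards [(tendsto_rpow_atTop (sub_pos.mpr h)).eventually_ge_atTop (C * A ^ ω'),
    eventually_gt_atTop 0] with x hx hx0
  have hsplit : C * x ^ (-ω) = (C * A ^ ω') * x ^ (-(ω - ω')) * (A * x) ^ (-ω') := by
    rw [Real.mul_rpow hA.le hx0.le, Real.rpow_neg hA.le ω', Real.rpow_neg hx0.le ω',
      Real.rpow_neg hx0.le, Real.rpow_neg hx0.le, Real.rpow_sub hx0]
    field_simp
  have hsmall : (C * A ^ ω') * x ^ (-(ω - ω')) ≤ 1 := by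
    rw [Real.rpow_neg hx0.le, ← div_eq_mul_inv]
    exact div_le_one_of_le₀ hx (Real.rpow_nonneg hx0.le _)
  rw [hsplit]
  exact mul_le_of_le_one_left (Real.rpow_nonneg (by positivity) _) hsmall

attribute [local instance] Matrix.linftyOpNormedAddCommGroup

lemma sum_norm_le_linfty_opNorm {ι κ α : Type*} [Fintype ι] [Fintype κ] [NormedAddCommGroup α]
    (a : Matrix ι κ α) (j : ι) : ∑ k, ‖a j k‖ ≤ ‖a‖ := by
  rw [linfty_opNorm_def]
  simp only [← coe_nnnorm, ← NNReal.coe_sum, NNReal.coe_le_coe]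
  exact Finset.le_sup (f := fun i => ∑ k, ‖a i k‖₊) (Finset.mem_univ j)

section Extension

variable {ι κ : Type*} [Fintype ι] [Fintype κ] {η : κ → ℝ} {ξ : ι → ℝ} {a : Matrix ι κ ℤ}
  {D : ℕ}

lemma eventually_mulVec_mem_approxSet (hD : 0 < D) (hξ : (D : ℝ) • ξ = a.map (↑) *ᵥ η)
    {ω ω' : ℝ} (hω' : 0 < ω') (h : ω' < ω) :
    ∀ᶠ q in cofinite, q ∈ approxSet η ω → a *ᵥ q ∈ approxSet ξ ω' := by
  rcases eq_or_ne a 0 with rfl | ha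
  · simp only [zero_mulVec]
    exact Eventually.of_forall fun _ _ => zero_mem_approxSet ξ ω'
  filter_upwards [tendsto_norm_cofinite_atTop.eventually
    (eventually_mul_rpow_neg_le (norm_pos_iff.mpr ha) (‖a‖ ^ 2 / D) h)] with q hq hmem
  rcases eq_or_ne (a *ᵥ q) 0 with h0 | h0
  · rw [h0]; exact zero_mem_approxSet ξ ω'
  intro i j
  have hD' : (0 : ℝ) < D := by exact_mod_cast hD
  have hcast : (fun k => ((a *ᵥ q) k : ℝ)) = a.map (↑) *ᵥ fun k => (q k : ℝ) :=
    funext (RingHom.map_mulVec (Int.castRingHom ℝ) a q)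
  have hrow : ∀ i, ∑ k, |(a.map ((↑) : ℤ → ℝ)) i k| ≤ ‖a‖ := fun i => by
    simpa only [Matrix.map_apply, ← Int.norm_eq_abs] using sum_norm_le_linfty_opNorm a i
  have hwedge : (D : ℝ) * |wedge (fun k => ((a *ᵥ q) k : ℝ)) ξ i j| ≤ ‖a‖ ^ 2 * ‖q‖ ^ (-ω) :=
    calc (D : ℝ) * |wedge (fun k => ((a *ᵥ q) k : ℝ)) ξ i j|
        = |wedge (a.map (↑) *ᵥ fun k => (q k : ℝ)) (a.map (↑) *ᵥ η) i j| := by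
          rw [← hξ, ← hcast, wedge_smul_right, abs_mul, abs_of_pos hD']
      _ ≤ (∑ k, |(a.map ((↑) : ℤ → ℝ)) i k|) * (∑ l, |(a.map ((↑) : ℤ → ℝ)) j l|) *
            ‖q‖ ^ (-ω) := abs_wedge_mulVec_le _ hmem i j
      _ ≤ ‖a‖ ^ 2 * ‖q‖ ^ (-ω) := by
          rw [sq]; gcongr
          · exact hrow i
          · exact hrow j
  calc |wedge (fun k => ((a *ᵥ q) k : ℝ)) ξ i j| ≤ ‖a‖ ^ 2 / D * ‖q‖ ^ (-ω) := by
        rw [div_mul_eq_mul_div, le_div_iff₀ hD', mul_comm]; exact hwedge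
    _ ≤ (‖a‖ * ‖q‖) ^ (-ω') := hq
    _ ≤ ‖a *ᵥ q‖ ^ (-ω') := Real.rpow_le_rpow_of_nonpos (norm_pos_iff.mpr h0)
        (linfty_opNorm_mulVec a q) (by linarith)

end Extension

lemma omega0_le_omega0_of_mulVec {m n : ℕ} {η : Fin m → ℝ} {ξ : Fin n → ℝ}
    (a : Matrix (Fin n) (Fin m) ℤ) (ha : Function.Injective a.mulVec) {D : ℕ} (hD : 0 < D)
    (hξ : (D : ℝ) • ξ = a.map (↑) *ᵥ η) : omega0 η ≤ omega0 ξ := by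
  refine omega0_le_of_forall_lt fun ω _ hinf ω' hω' hlt => ?_
  have hbad := eventually_cofinite.mp (eventually_mulVec_mem_approxSet hD hξ hω' hlt)
  refine ((hinf.sdiff hbad).image ha.injOn).mono ?_
  rintro _ ⟨q, ⟨hq, hgood⟩, rfl⟩
  exact (not_not.mp hgood) hq

lemma exists_nat_mul_eq_intCast {ι : Type*} [Fintype ι] (c : ι → ℚ) :
    ∃ D : ℕ, 0 < D ∧ ∀ i, ∃ z : ℤ, (z : ℚ) = D * c i := by
  refine ⟨∏ i, (c i).den, Finset.prod_pos fun i _ => (c i).pos, fun i => ?_⟩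
  obtain ⟨m, hm⟩ := Finset.dvd_prod_of_mem (fun i => (c i).den) (Finset.mem_univ i)
  refine ⟨(c i).num * m, ?_⟩
  rw [hm]
  push_cast
  rw [← Rat.mul_den_eq_num]
  ring

section Span

variable {ι κ : Type*} [Fintype ι] [Fintype κ] {η : κ → ℝ}

lemma exists_intMatrix_of_mem_span {ξ : ι → ℝ}
    (h : ∀ j, ξ j ∈ Submodule.span ℚ (Set.range η)) :
    ∃ D : ℕ, 0 < D ∧ ∃ a : Matrix ι κ ℤ, (D : ℝ) • ξ = a.map (↑) *ᵥ η := by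
  choose c hc using fun j => (Submodule.mem_span_range_iff_exists_fun ℚ).mp (h j)
  obtain ⟨D, hD, hint⟩ := exists_nat_mul_eq_intCast fun p : ι × κ => c p.1 p.2
  choose a ha using hint
  refine ⟨D, hD, Matrix.of fun j k => a (j, k), funext fun j => ?_⟩
  have hak : ∀ k, (a (j, k) : ℝ) = ((D * c j k : ℚ) : ℝ) := fun k => by
    rw [← ha (j, k), Rat.cast_intCast]
  simp only [Pi.smul_apply, smul_eq_mul, mulVec, dotProduct, Matrix.map_apply, Matrix.of_apply,
    hak, ← hc j, Finset.mul_sum, Rat.smul_def, Rat.cast_mul, Rat.cast_natCast, mul_assoc]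

lemma eq_single_of_linearIndependent [DecidableEq κ] (hη : LinearIndependent ℚ η) {z : κ → ℤ}
    {i : κ} {D : ℤ} (h : (D : ℝ) * η i = ∑ k, (z k : ℝ) * η k) : z = Pi.single i D := by
  funext k
  refine Fintype.linearIndependent_iffₛ.mp (hη.restrict_scalars' ℤ) z (Pi.single i D) ?_ k
  simp only [zsmul_eq_mul, ← h, Pi.single_apply, Int.cast_ite, Int.cast_zero, ite_mul, zero_mul,
    Finset.sum_ite_eq', Finset.mem_univ, if_true]

end Span

lemma mulVec_injective_of_row_eq_single {ι κ : Type*} [Fintype κ] [DecidableEq κ]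
    {a : Matrix ι κ ℤ} (e : κ → ι) {D : ℤ} (hD : D ≠ 0) (he : ∀ i, a (e i) = Pi.single i D) :
    Function.Injective a.mulVec := by
  intro q q' hqq'
  funext i
  have hi := congrFun hqq' (e i)
  simp only [mulVec, he, single_dotProduct] at hi
  exact mul_left_cancel₀ hD hi

theorem omega0_eq_omega0_of_span_general (r s : ℕ)
    (ξ : Fin (r + 1) → ℝ) (h : s + 1 ≤ r + 1)
    (hindep : LinearIndependent ℚ (fun i : Fin (s + 1) => ξ (Fin.castLE h i)))
    (hspan : ∀ j : Fin (r + 1), s < (j : ℕ) →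
      ξ j ∈ Submodule.span ℚ (Set.range (fun i : Fin (s + 1) => ξ (Fin.castLE h i)))) :
    omega0 ξ = omega0 (fun i : Fin (s + 1) => ξ (Fin.castLE h i)) := by
  have hmem : ∀ j, ξ j ∈ Submodule.span ℚ (Set.range fun i : Fin (s + 1) => ξ (Fin.castLE h i)) :=
    fun j => if hj : s < (j : ℕ) then hspan j hj
      else Submodule.subset_span ⟨⟨j, by omega⟩, rfl⟩
  obtain ⟨D, hD, a, ha⟩ := exists_intMatrix_of_mem_span hmem
  have hrows : ∀ i, a (Fin.castLE h i) = Pi.single i (D : ℤ) := fun i =>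
    eq_single_of_linearIndependent hindep
      (by simpa [mulVec, dotProduct] using congrFun ha (Fin.castLE h i))
  exact le_antisymm (omega0_le_omega0_comp ξ (Fin.castLE h) (hindep.ne_zero 0))
    (omega0_le_omega0_of_mulVec a (mulVec_injective_of_row_eq_single _ (by omega) hrows) hD ha)

theorem omega0_eq_omega0_of_span (r s : ℕ) (hs : 1 ≤ s) (hsr : s ≤ r)
    (ξ : Fin (r + 1) → ℝ) (h : s + 1 ≤ r + 1)
    (hindep : LinearIndependent ℚ (fun i : Fin (s + 1) => ξ (Fin.castLE h i)))
    (hspan : ∀ j : Fin (r + 1), s < (j : ℕ) →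
      ξ j ∈ Submodule.span ℚ (Set.range (fun i : Fin (s + 1) => ξ (Fin.castLE h i)))) :
    omega0 ξ = omega0 (fun i : Fin (s + 1) => ξ (Fin.castLE h i)) :=
  omega0_eq_omega0_of_span_general r s ξ h hindep hspan
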